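/- arXiv:1206.2558 — 4 statements merged into one kernel-verified Lean document; each statement's English description precedes it below -/
import Mathlib

section
/- Let p,q ≥ 2 be coprime integers, n ≥ 1 an integer, and let τ be the tau function of Σ(p,q,pqn-1). Then for every i with 0 ≤ i ≤ N-2, τ(M_i) - τ(m_{i+1}) = #{s ∈ Z_{≥0} : s ∉ S_{p,q} and s ≥ ⌊(i+1)/n⌋ + 1}, and this quantity is strictly positive. -/
/-- The numerical semigroup `S_{p,q} = {ap + bq : a,b ∈ ℤ_{≥0}}`, as a set of integers. -/
def Spq (p q : ℤ) : Set ℤ := {s | ∃ a b : ℤ, 0 ≤ a ∧ 0 ≤ b ∧ s = a * p + b * q}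

/-- `Δ_j = 1 - j·e₀ - Σᵢ ⌈j·bᵢ/aᵢ⌉` for the Seifert data
`(e₀, (p,p'), (q,q'), (pqn-1, pqn-n-1))` with `e₀ = -2` of `Σ(p,q,pqn-1)`. -/
noncomputable def brieskornDelta (p q n p' q' : ℤ) (j : ℤ) : ℤ :=
  1 + 2 * j - (⌈(j * p' : ℚ) / (p : ℚ)⌉ + ⌈(j * q' : ℚ) / (q : ℚ)⌉
    + ⌈(j * (p * q * n - n - 1) : ℚ) / (p * q * n - 1 : ℚ)⌉)

/-- The tau function `τ(k) = Σ_{j=0}^{k-1} Δ_j` of `Σ(p,q,pqn-1)`. -/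
noncomputable def brieskornTau (p q n p' q' : ℤ) (k : ℤ) : ℤ :=
  ∑ j ∈ Finset.range k.toNat, brieskornDelta p q n p' q' (j : ℤ)

/-- `α_i = #{s ∈ ℤ_{≥0} : s ∉ S_{p,q}, s > i}`. -/
noncomputable def gapAlpha (p q i : ℤ) : ℕ :=
  Set.ncard {s : ℤ | 0 ≤ s ∧ s ∉ Spq p q ∧ i < s}

private lemma ceil_int_div (a b : ℤ) (hb : 0 < b) : ⌈(a:ℚ)/(b:ℚ)⌉ = -((-a)/b) := by
  have h := Rat.floor_intCast_div_natCast (-a) b.toNat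
  have hbq : ((b.toNat : ℕ) : ℚ) = (b:ℚ) := by
    have := Int.toNat_of_nonneg hb.le
    exact_mod_cast congrArg (fun z : ℤ => (z : ℚ)) this
  rw [hbq, Int.toNat_of_nonneg hb.le] at h
  have h2 : ⌈(a:ℚ)/(b:ℚ)⌉ = -⌊-((a:ℚ)/(b:ℚ))⌋ := by
    rw [Int.floor_neg]; ring
  rw [h2, ← h]
  congr 1
  push_cast
  ring

private lemma aux_nonpos (x y z : ℤ) (hx : 0 ≤ x) (hy : y ≤ 0) (hz : 0 ≤ z) :
    (x * y) * z ≤ 0 := by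
  have h1 : x * y ≤ 0 := mul_nonpos_iff.mpr (Or.inl ⟨hx, hy⟩)
  exact mul_nonpos_iff.mpr (Or.inr ⟨h1, hz⟩)

open scoped Classical in
private lemma delta_key (p q n p' q' : ℤ) (hp : 2 ≤ p) (hq : 2 ≤ q)
    (hpq : IsCoprime p q) (hn : 1 ≤ n)
    (hp' : q * p' ≡ 1 [ZMOD p]) (hq' : p * q' ≡ 1 [ZMOD q])
    (hpq1 : q * p' + p * q' = p * q + 1)
    (i k : ℤ) (hi : 0 ≤ i) (hk1 : 1 ≤ k) (hk2 : k ≤ p * q - 1)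
    (hkr : i + n * k ≤ n * (p * q) - 2) :
    brieskornDelta p q n p' q' (p * q * i + k)
      = if (p * q - k) ∈ Spq p q then 0 else -1 := by
  have hp0 : (0:ℤ) < p := by linarith
  have hq0 : (0:ℤ) < q := by linarith
  have hpq0 : (0:ℤ) < p * q := mul_pos hp0 hq0
  have hr0 : (0:ℤ) < p * q * n - 1 := by nlinarith
  set j : ℤ := p * q * i + k with hj
  set A : ℤ := (-(k * q')) / q with hAdef
  set a : ℤ := (-(k * q')) % q with hadef
  set B : ℤ := (-(k * p')) / p with hBdef
  set b : ℤ := (-(k * p')) % p with hbdef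
  have hA : q * A + a = -(k * q') := Int.mul_ediv_add_emod _ _
  have hB : p * B + b = -(k * p') := Int.mul_ediv_add_emod _ _
  have ha0 : 0 ≤ a := Int.emod_nonneg _ hq0.ne'
  have haq : a < q := Int.emod_lt_of_pos _ hq0
  have hb0 : 0 ≤ b := Int.emod_nonneg _ hp0.ne'
  have hbp : b < p := Int.emod_lt_of_pos _ hp0
  have e1 : ((j:ℚ) * (p':ℚ)) = (((j * p' : ℤ)):ℚ) := by push_cast; ring
  have e2 : ((j:ℚ) * (q':ℚ)) = (((j * q' : ℤ)):ℚ) := by push_cast; ring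
  have e3 : ((j:ℚ) * ((p:ℚ) * (q:ℚ) * (n:ℚ) - (n:ℚ) - 1)) = (((j * (p*q*n - n - 1) : ℤ)):ℚ) := by
    push_cast; ring
  have e3d : ((p:ℚ) * (q:ℚ) * (n:ℚ) - 1) = (((p*q*n - 1 : ℤ)):ℚ) := by push_cast; ring
  have d1 : (-(j * p')) / p = B + (-(q * i * p')) := by
    rw [show -(j * p') = (-(k * p')) + (-(q * i * p')) * p by rw [hj]; ring,
      Int.add_mul_ediv_right _ _ hp0.ne']
  have d2 : (-(j * q')) / q = A + (-(p * i * q')) := by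
    rw [show -(j * q') = (-(k * q')) + (-(p * i * q')) * q by rw [hj]; ring,
      Int.add_mul_ediv_right _ _ hq0.ne']
  have hnk0 : 0 ≤ i + n * k := by nlinarith
  have hnklt : i + n * k < p * q * n - 1 := by nlinarith
  have d3 : (-(j * (p*q*n - n - 1))) / (p*q*n - 1) = i - j := by
    rw [show -(j * (p*q*n - n - 1)) = (i + n * k) + (i - j) * (p*q*n - 1) by rw [hj]; ring,
      Int.add_mul_ediv_right _ _ hr0.ne', Int.ediv_eq_zero_of_lt hnk0 hnklt]
    ring
  have hDelta : brieskornDelta p q n p' q' j = 1 + k + A + B := by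
    unfold brieskornDelta
    rw [e1, e2, e3, e3d, ceil_int_div _ _ hp0, ceil_int_div _ _ hq0, ceil_int_div _ _ hr0,
      d1, d2, d3]
    rw [hj]; linear_combination (-i) * hpq1
  have hd1 : p ∣ 1 - q * p' := hp'.dvd
  have hd2 : q ∣ 1 - p * q' := hq'.dvd
  obtain ⟨u, hu⟩ := hd1
  obtain ⟨v, hv⟩ := hd2
  have hdp : p ∣ k + a * p + b * q := ⟨k * u + a - B * q, by linear_combination k * hu + q * hB⟩
  have hdq : q ∣ k + a * p + b * q := ⟨k * v + b - A * p, by linear_combination k * hv + p * hA⟩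
  obtain ⟨mm, hmm⟩ := hpq.mul_dvd hdp hdq
  have hsum_pos : 0 < k + a * p + b * q := by
    have h1 : 0 ≤ a * p := mul_nonneg ha0 hp0.le
    have h2 : 0 ≤ b * q := mul_nonneg hb0 hq0.le
    linarith
  have hsum_lt : k + a * p + b * q < 3 * (p * q) := by
    have h1 : a * p ≤ (q - 1) * p := mul_le_mul_of_nonneg_right (by linarith) hp0.le
    have h2 : b * q ≤ (p - 1) * q := mul_le_mul_of_nonneg_right (by linarith) hq0.le
    nlinarith
  have hm1 : 1 ≤ mm := by
    have h : p * q * 0 < p * q * mm := by rw [← hmm]; simpa using hsum_pos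
    have := lt_of_mul_lt_mul_left h hpq0.le
    linarith
  have hm2 : mm ≤ 2 := by
    have h : p * q * mm < p * q * 3 := by rw [← hmm]; linarith
    have := lt_of_mul_lt_mul_left h hpq0.le
    linarith
  have hprod : p * q * (1 + k + A + B) = p * q - (k + a * p + b * q) := by
    linear_combination p * hA + q * hB + (-k) * hpq1
  have hmm12 : mm = 1 ∨ mm = 2 := by omega
  rcases hmm12 with h1 | h2
  · have hsum : k + a * p + b * q = p * q := by rw [hmm, h1]; ring
    have hmem : (p * q - k) ∈ Spq p q := ⟨a, b, ha0, hb0, by linarith⟩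
    rw [if_pos hmem, hDelta]
    have h0 : p * q * (1 + k + A + B) = 0 := by rw [hprod, hsum]; ring
    rcases mul_eq_zero.mp h0 with h | h
    · exact absurd h hpq0.ne'
    · linarith
  · have hsum : k + a * p + b * q = 2 * (p * q) := by rw [hmm, h2]; ring
    have hmem : (p * q - k) ∉ Spq p q := by
      rintro ⟨a', b', ha', hb', heq⟩
      obtain ⟨w, hw⟩ := hdq
      obtain ⟨w', hw'⟩ := hdp
      have hqd : q ∣ (a - a') * p := ⟨w - p + b' - b, by linear_combination hw + heq⟩
      have hpd : p ∣ (b - b') * q := ⟨w' - q + a' - a, by linear_combination hw' + heq⟩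
      have hq_dvd : q ∣ a - a' := (hpq.symm).dvd_of_dvd_mul_right hqd
      have hp_dvd : p ∣ b - b' := hpq.dvd_of_dvd_mul_right hpd
      obtain ⟨s, hs⟩ := hq_dvd
      obtain ⟨t, ht⟩ := hp_dvd
      have hs1 : s ≤ 0 := by
        by_contra hcon
        push_neg at hcon
        have : q * 1 ≤ q * s := mul_le_mul_of_nonneg_left hcon hq0.le
        linarith
      have ht1 : t ≤ 0 := by
        by_contra hcon
        push_neg at hcon
        have : p * 1 ≤ p * t := mul_le_mul_of_nonneg_left hcon hp0.le
        linarith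
      have key : k + a * p + b * q = p * q + (q * s) * p + (p * t) * q := by
        linear_combination (-1) * heq + p * hs + q * ht
      have hh1 : (q * s) * p ≤ 0 := aux_nonpos q s p hq0.le hs1 hp0.le
      have hh2 : (p * t) * q ≤ 0 := aux_nonpos p t q hp0.le ht1 hq0.le
      linarith
    rw [if_neg hmem, hDelta]
    have h0 : p * q * (1 + k + A + B) = p * q * (-1) := by rw [hprod, hsum]; ring
    have := mul_left_cancel₀ hpq0.ne' h0
    linarith

private lemma frob_not_mem (p q : ℤ) (hp : 2 ≤ p) (hq : 2 ≤ q) (hpq : IsCoprime p q) :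
    p * q - p - q ∉ Spq p q := by
  have hp0 : (0:ℤ) < p := by linarith
  have hq0 : (0:ℤ) < q := by linarith
  rintro ⟨a, b, ha, hb, heq⟩
  have h1 : p ∣ (b + 1) * q := ⟨q - 1 - a, by linear_combination (-1) * heq⟩
  have h2 : q ∣ (a + 1) * p := ⟨p - 1 - b, by linear_combination (-1) * heq⟩
  have hb1 : p ∣ b + 1 := hpq.dvd_of_dvd_mul_right h1
  have ha1 : q ∣ a + 1 := hpq.symm.dvd_of_dvd_mul_right h2
  obtain ⟨t, ht⟩ := hb1
  obtain ⟨s, hs⟩ := ha1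
  have ht1 : 1 ≤ t := by
    by_contra hcon
    push_neg at hcon
    have : p * t ≤ p * 0 := mul_le_mul_of_nonneg_left (by linarith) hp0.le
    linarith
  have hs1 : 1 ≤ s := by
    by_contra hcon
    push_neg at hcon
    have : q * s ≤ q * 0 := mul_le_mul_of_nonneg_left (by linarith) hq0.le
    linarith
  have hbp : p - 1 ≤ b := by
    have : p * 1 ≤ p * t := mul_le_mul_of_nonneg_left ht1 hp0.le
    linarith
  have haq : q - 1 ≤ a := by
    have : q * 1 ≤ q * s := mul_le_mul_of_nonneg_left hs1 hq0.le
    linarith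
  have h3 : (q - 1) * p ≤ a * p := mul_le_mul_of_nonneg_right haq hp0.le
  have h4 : (p - 1) * q ≤ b * q := mul_le_mul_of_nonneg_right hbp hq0.le
  nlinarith

private lemma large_mem (p q q' : ℤ) (hp : 2 ≤ p) (hq : 2 ≤ q)
    (hq' : p * q' ≡ 1 [ZMOD q]) (s : ℤ) (hs : p * q - p - q < s) : s ∈ Spq p q := by
  have hp0 : (0:ℤ) < p := by linarith
  have hq0 : (0:ℤ) < q := by linarith
  obtain ⟨v, hv⟩ : q ∣ 1 - p * q' := hq'.dvd
  set D : ℤ := (s * q') / q with hD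
  set a : ℤ := (s * q') % q with ha
  have hDa : q * D + a = s * q' := Int.mul_ediv_add_emod _ _
  have ha0 : 0 ≤ a := Int.emod_nonneg _ hq0.ne'
  have haq : a < q := Int.emod_lt_of_pos _ hq0
  obtain ⟨b, hb⟩ : q ∣ s - a * p := ⟨s * v + D * p, by linear_combination s * hv + (-p) * hDa⟩
  have hap : a * p ≤ (q - 1) * p := mul_le_mul_of_nonneg_right (by linarith) hp0.le
  have hb0 : 0 ≤ b := by
    have hgt : q * (-1) < q * b := by nlinarith
    have := lt_of_mul_lt_mul_left hgt hq0.le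
    linarith
  exact ⟨a, b, ha0, hb0, by linear_combination hb⟩

open scoped Classical in
/-- For the tau function `τ` of `Σ(p,q,pqn-1)` (coprime `p,q ≥ 2`, `n ≥ 1`), with
`g = (p-1)(q-1)/2`, `N = n(2g-1)`, `M_i = pqi + 1` and `m_i = pqi - ⌊i/n⌋`: for every
`0 ≤ i ≤ N-2`, `τ(M_i) - τ(m_{i+1}) = #{s ∈ ℤ_{≥0} : s ∉ S_{p,q}, s ≥ ⌊(i+1)/n⌋ + 1}`,
and this is positive. -/
theorem brieskornTau_branch_down (p q n p' q' : ℤ) (hp : 2 ≤ p) (hq : 2 ≤ q)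
    (hpq : IsCoprime p q) (hn : 1 ≤ n)
    (hp'0 : 0 < p') (hp'p : p' < p) (hq'0 : 0 < q') (hq'q : q' < q)
    (hp' : q * p' ≡ 1 [ZMOD p]) (hq' : p * q' ≡ 1 [ZMOD q])
    (g : ℤ) (hg : 2 * g = (p - 1) * (q - 1))
    (i : ℤ) (hi0 : 0 ≤ i) (hiN : i ≤ n * (2 * g - 1) - 2) :
    brieskornTau p q n p' q' (p * q * i + 1)
        - brieskornTau p q n p' q' (p * q * (i + 1) - (i + 1) / n)
      = (Set.ncard {s : ℤ | 0 ≤ s ∧ s ∉ Spq p q ∧ (i + 1) / n + 1 ≤ s} : ℤ) ∧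
    0 < Set.ncard {s : ℤ | 0 ≤ s ∧ s ∉ Spq p q ∧ (i + 1) / n + 1 ≤ s} := by
  have hp0 : (0:ℤ) < p := by linarith
  have hq0 : (0:ℤ) < q := by linarith
  have hn0 : (0:ℤ) < n := by linarith
  have hpq0 : (0:ℤ) < p * q := mul_pos hp0 hq0
  -- `q p' + p q' = p q + 1`
  have hpq1 : q * p' + p * q' = p * q + 1 := by
    obtain ⟨u, hu⟩ : p ∣ 1 - q * p' := hp'.dvd
    obtain ⟨v, hv⟩ : q ∣ 1 - p * q' := hq'.dvd
    have hdp : p ∣ q * p' + p * q' - 1 := ⟨-u + q', by linear_combination (-1) * hu⟩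
    have hdq : q ∣ q * p' + p * q' - 1 := ⟨-v + p', by linear_combination (-1) * hv⟩
    obtain ⟨w, hw⟩ := hpq.mul_dvd hdp hdq
    have hb1 : 0 < q * p' + p * q' - 1 := by nlinarith
    have hb2 : q * p' + p * q' - 1 < 2 * (p * q) := by nlinarith
    have hw1 : w = 1 := by
      have e1 : p * q * 0 < p * q * w := by rw [← hw]; linarith
      have e2 : p * q * w < p * q * 2 := by rw [← hw]; linarith
      have f1 := lt_of_mul_lt_mul_left e1 hpq0.le
      have f2 := lt_of_mul_lt_mul_left e2 hpq0.le
      omega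
    rw [hw1] at hw; linarith
  have hgx : 2 * g = p * q - p - q + 1 := by linear_combination hg
  set c : ℤ := (i + 1) / n with hcdef
  have hc0 : 0 ≤ c := Int.ediv_nonneg (by linarith) hn0.le
  have hcl : n * c ≤ i + 1 := by
    have h1 := Int.mul_ediv_add_emod (i + 1) n
    have h2 := Int.emod_nonneg (i + 1) hn0.ne'
    linarith
  have hcu : i + 1 < n * c + n := by
    have h1 := Int.mul_ediv_add_emod (i + 1) n
    have h2 := Int.emod_lt_of_pos (i + 1) hn0
    linarith
  have hcF : c ≤ 2 * g - 2 := by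
    have h1 : n * c < n * (2 * g - 1) := by linarith
    have := lt_of_mul_lt_mul_left h1 hn0.le
    linarith
  set K : ℤ := p * q - 1 - c with hKdef
  have hKpq : p + q ≤ K := by rw [hKdef]; linarith
  have hK0 : 0 < K := by linarith
  set M : ℤ := p * q * i + 1 with hMdef
  set m : ℤ := p * q * (i + 1) - c with hmdef
  have hmM : m = M + K := by rw [hmdef, hMdef, hKdef]; ring
  have hM0 : 0 ≤ M := by
    have : 0 ≤ p * q * i := mul_nonneg hpq0.le hi0
    rw [hMdef]; linarith
  have hMm : M ≤ m := by rw [hmM]; linarith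
  have hMt : (M.toNat : ℤ) = M := Int.toNat_of_nonneg hM0
  have hKt : (K.toNat : ℤ) = K := Int.toNat_of_nonneg hK0.le
  have hcount : m.toNat - M.toNat = K.toNat := by
    rw [hmM, Int.toNat_add hM0 hK0.le]; omega
  -- the sum over the gap interval
  have htau : brieskornTau p q n p' q' m - brieskornTau p q n p' q' M
      = ∑ t ∈ Finset.range K.toNat,
          (if (p * q - ((t : ℤ) + 1)) ∈ Spq p q then (0:ℤ) else -1) := by
    unfold brieskornTau
    rw [← Finset.sum_Ico_eq_sub _ (Int.toNat_le_toNat hMm), Finset.sum_Ico_eq_sum_range, hcount]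
    apply Finset.sum_congr rfl
    intro t ht
    have htK : (t : ℤ) < K := by
      rw [← hKt]; exact_mod_cast Finset.mem_range.mp ht
    have harg : ((M.toNat + t : ℕ) : ℤ) = p * q * i + ((t : ℤ) + 1) := by
      push_cast [hMt]; rw [hMdef]; ring
    rw [harg]
    apply delta_key p q n p' q' hp hq hpq hn hp' hq' hpq1 i ((t:ℤ)+1) hi0 (by linarith)
      (by rw [hKdef] at htK; linarith)
    -- i + n * k ≤ n * (p*q) - 2
    have hk : (t:ℤ) + 1 ≤ K := by linarith
    have h1 : n * ((t:ℤ)+1) ≤ n * K := mul_le_mul_of_nonneg_left hk hn0.le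
    have h2 : n * K = n * (p * q) - n - n * c := by rw [hKdef]; ring
    linarith
  -- count gaps as a Finset card
  set T : Finset ℤ := (Finset.Icc (c + 1) (p * q - 1)).filter (fun s => s ∉ Spq p q) with hTdef
  have hset : {s : ℤ | 0 ≤ s ∧ s ∉ Spq p q ∧ c + 1 ≤ s} = ↑T := by
    ext s
    simp only [Set.mem_setOf_eq, hTdef, Finset.coe_filter, Finset.mem_Icc, Set.mem_setOf_eq]
    constructor
    · rintro ⟨h0, hnot, hcs⟩
      refine ⟨⟨hcs, ?_⟩, hnot⟩
      by_contra hcon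
      push_neg at hcon
      exact hnot (large_mem p q q' hp hq hq' s (by linarith))
    · rintro ⟨⟨h1, _⟩, hnot⟩
      exact ⟨by linarith, hnot, h1⟩
  have hncard : ({s : ℤ | 0 ≤ s ∧ s ∉ Spq p q ∧ c + 1 ≤ s}).ncard = T.card := by
    rw [hset]; exact Set.ncard_coe_finset T
  -- bijection between the filtered interval and T
  have hbij : ((Finset.range K.toNat).filter
      (fun t : ℕ => (p * q - ((t : ℤ) + 1)) ∉ Spq p q)).card = T.card := by
    apply Finset.card_bij (fun (t : ℕ) _ => p * q - 1 - (t : ℤ))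
    · intro t ht
      simp only [Finset.mem_filter, Finset.mem_range] at ht
      have htK : (t : ℤ) < K := by rw [← hKt]; exact_mod_cast ht.1
      simp only [hTdef, Finset.mem_filter, Finset.mem_Icc]
      refine ⟨⟨by rw [hKdef] at htK; linarith, by have := Int.natCast_nonneg t; linarith⟩, ?_⟩
      · have : p * q - 1 - (t:ℤ) = p * q - ((t:ℤ) + 1) := by ring
        rw [this]; exact ht.2
    · intro t1 h1 t2 h2 heq
      have : (t1 : ℤ) = (t2 : ℤ) := by linarith
      exact_mod_cast this
    · intro b hb
      simp only [hTdef, Finset.mem_filter, Finset.mem_Icc] at hb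
      obtain ⟨⟨hb1, hb2⟩, hb3⟩ := hb
      have hnn : 0 ≤ p * q - 1 - b := by linarith
      refine ⟨(p * q - 1 - b).toNat, ?_, ?_⟩
      · simp only [Finset.mem_filter, Finset.mem_range]
        have he : (((p * q - 1 - b).toNat : ℕ) : ℤ) = p * q - 1 - b := Int.toNat_of_nonneg hnn
        constructor
        · have : (((p * q - 1 - b).toNat : ℕ) : ℤ) < (K.toNat : ℤ) := by
            rw [he, hKt, hKdef]; linarith
          exact_mod_cast this
        · have : p * q - ((((p * q - 1 - b).toNat : ℕ) : ℤ) + 1) = b := by rw [he]; ring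
          rw [this]; exact hb3
      · have he : (((p * q - 1 - b).toNat : ℕ) : ℤ) = p * q - 1 - b := Int.toNat_of_nonneg hnn
        rw [he]; ring
  -- turn the sum into a card
  have hsumcard : ∑ t ∈ Finset.range K.toNat,
      (if (p * q - ((t : ℤ) + 1)) ∈ Spq p q then (0:ℤ) else -1)
      = -(((Finset.range K.toNat).filter
          (fun t : ℕ => (p * q - ((t : ℤ) + 1)) ∉ Spq p q)).card : ℤ) := by
    rw [Finset.sum_ite, Finset.sum_const, Finset.sum_const]
    simp
  constructor
  · rw [show brieskornTau p q n p' q' M - brieskornTau p q n p' q' m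
        = -(brieskornTau p q n p' q' m - brieskornTau p q n p' q' M) by ring,
      htau, hsumcard, hncard, hbij]
    ring
  · rw [hncard]
    apply Finset.card_pos.mpr
    refine ⟨p * q - p - q, ?_⟩
    simp only [hTdef, Finset.mem_filter, Finset.mem_Icc]
    exact ⟨⟨by linarith, by linarith⟩, frob_not_mem p q hp hq hpq⟩
end

section
/- Let p,q ≥ 2 be coprime integers, n ≥ 1 an integer, and let τ be the tau function of Σ(p,q,pqn-1). Then for every integer k with 0 ≤ k ≤ g-2 and every integer i with nk ≤ i < nk + n, one has τ(M_{n(g-1)-1-i}) - τ(m_{n(g-1)-1-i}) = α_{g+k} and τ(M_{ng+i-1}) - τ(m_{ng+i}) = α_{g+k} (symmetry of branch lengths). -/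
/-!
Write `j = pqt - s` with `0 ≤ s < pq`. Since `p'q + q'p = pq + 1`, the three ceilings in
`Δ_j` combine to `Δ_{pqt-s} = [s ∈ S_{p,q}] + ⌊(t - sn)/(pqn - 1)⌋`, and the floor is constant
(`0`, resp. `-1`) on the window of `j` spanned by each branch. So the first difference counts
elements of `S_{p,q}` in `[0, g-k-2]` and the second counts gaps in `(g+k, pq)`. The involution
`s ↦ 2g - 1 - s` exchanges elements and gaps, and there are no gaps from `2g` on, so both counts
equal `α_{g+k}`.
-/

open Finset

namespace Spq

variable {p q : ℤ}

lemma exists_eq_mul_add_mul (hp : 0 < p) (hpq : IsCoprime p q) (s : ℤ) :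
    ∃ a b, 0 ≤ b ∧ b < p ∧ s = a * p + b * q := by
  obtain ⟨u, v, huv⟩ := hpq
  refine ⟨s * u + s * v / p * q, s * v % p, Int.emod_nonneg _ hp.ne',
    Int.emod_lt_of_pos _ hp, ?_⟩
  linear_combination (-s) * huv - q * Int.mul_ediv_add_emod (s * v) p

lemma mem_iff_of_eq (hq : 0 < q) (hpq : IsCoprime p q) {s a b : ℤ} (hb0 : 0 ≤ b) (hbp : b < p)
    (hs : s = a * p + b * q) : s ∈ Spq p q ↔ 0 ≤ a := by
  refine ⟨fun ⟨a', b', ha', hb', hs'⟩ => ?_, fun ha => ⟨a, b, ha, hb0, hs⟩⟩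
  obtain ⟨c, hc⟩ : p ∣ b - b' :=
    hpq.dvd_of_dvd_mul_right ⟨a' - a, by linear_combination hs' - hs⟩
  have hc1 : c ≤ 0 := by nlinarith
  have hac : a' - a = c * q := by
    have hp : p ≠ 0 := by rintro rfl; omega
    exact mul_right_cancel₀ hp (by linear_combination hs - hs' + q * hc)
  nlinarith

lemma mem_iff_not_mem_sub (hp : 0 < p) (hq : 0 < q) (hpq : IsCoprime p q) (s : ℤ) :
    s ∈ Spq p q ↔ p * q - p - q - s ∉ Spq p q := by
  obtain ⟨a, b, hb0, hbp, hs⟩ := exists_eq_mul_add_mul hp hpq s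
  rw [mem_iff_of_eq hq hpq hb0 hbp hs,
    mem_iff_of_eq hq hpq (b := p - 1 - b) (a := -1 - a) (by omega) (by omega) (by rw [hs]; ring)]
  omega

lemma mem_of_lt (hp : 0 < p) (hq : 0 < q) (hpq : IsCoprime p q) {s : ℤ}
    (hs : p * q - p - q < s) : s ∈ Spq p q := by
  obtain ⟨a, b, hb0, hbp, rfl⟩ := exists_eq_mul_add_mul hp hpq s
  rw [mem_iff_of_eq hq hpq hb0 hbp rfl]
  by_contra! ha
  nlinarith

open Classical in
lemma ediv_add_ediv_eq {p' q' : ℤ} (hp : 0 < p) (hq : 0 < q) (hkey : p' * q + q' * p = p * q + 1)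
    {s : ℤ} (hs0 : 0 ≤ s) (hs : s < p * q) :
    s * p' / p + s * q' / q = s - if s ∈ Spq p q then 0 else 1 := by
  have hpq : IsCoprime p q := ⟨q' - q, p', by linear_combination hkey⟩
  have hA := Int.emod_nonneg (s * p') hp.ne'
  have hA' := Int.emod_lt_of_pos (s * p') hp
  have hB := Int.emod_nonneg (s * q') hq.ne'
  have hB' := Int.emod_lt_of_pos (s * q') hq
  have hW : q * (s * p' % p) + p * (s * q' % q) = s + p * q * (s - s * p' / p - s * q' / q) := by
    linear_combination s * hkey + q * Int.mul_ediv_add_emod (s * p') p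
      + p * Int.mul_ediv_add_emod (s * q') q
  generalize s * p' % p = A at *
  generalize s * q' % q = B at *
  generalize hWdef : s - s * p' / p - s * q' / q = W at hW
  -- `0 ≤ q * A + p * B < 2 * p * q` and `0 ≤ s < p * q`, so `W` is `0` or `1`;
  -- `W = 1` writes `s = (B - q) * p + A * q` with `0 ≤ A < p`, which is a gap.
  have hW01 : W = 0 ∨ W = 1 := by
    have : 0 ≤ q * A := by positivity
    have : 0 ≤ p * B := by positivity
    have : q * A ≤ q * (p - 1) := by gcongr; omega
    have : p * B ≤ p * (q - 1) := by gcongr; omega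
    have : -1 < W := by nlinarith
    have : W < 2 := by nlinarith
    omega
  rcases hW01 with rfl | rfl
  · have hmem : s ∈ Spq p q := ⟨B, A, hB, hA, by linear_combination -hW⟩
    rw [if_pos hmem]; omega
  · have hmem : s ∉ Spq p q := by
      rw [mem_iff_of_eq hq hpq hA hA' (a := B - q) (by linear_combination -hW)]
      omega
    rw [if_neg hmem]; omega

end Spq

lemma mul_add_mul_eq_mul_add_one {p q p' q' : ℤ} (hpq : IsCoprime p q)
    (hp'0 : 0 < p') (hp'p : p' < p) (hq'0 : 0 < q') (hq'q : q' < q)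
    (hp' : q * p' ≡ 1 [ZMOD p]) (hq' : p * q' ≡ 1 [ZMOD q]) :
    p' * q + q' * p = p * q + 1 := by
  have hdp : p ∣ p' * q + q' * p - 1 := by
    have := dvd_sub (dvd_mul_left p q') hp'.dvd
    rwa [show q' * p - (1 - q * p') = p' * q + q' * p - 1 by ring] at this
  have hdq : q ∣ p' * q + q' * p - 1 := by
    have := dvd_sub (dvd_mul_left q p') hq'.dvd
    rwa [show p' * q - (1 - p * q') = p' * q + q' * p - 1 by ring] at this
  obtain ⟨w, hw⟩ := hpq.mul_dvd hdp hdq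
  have hpq0 : 0 < p * q := by nlinarith
  have : 0 < w := by
    by_contra! h
    nlinarith [mul_nonpos_of_nonneg_of_nonpos hpq0.le h]
  have : w < 2 := by
    by_contra! h
    nlinarith [mul_le_mul_of_nonneg_left h hpq0.le]
  obtain rfl : w = 1 := by omega
  linarith

lemma Rat.ceil_intCast_div_intCast {a b : ℤ} (hb : 0 < b) :
    ⌈(a : ℚ) / b⌉ = -((-a) / b) := by
  lift b to ℕ using hb.le
  exact_mod_cast Rat.ceil_intCast_div_natCast a b

section Delta

variable {p q n p' q' : ℤ}

lemma brieskornDelta_eq_ediv (hp : 0 < p) (hq : 0 < q) (hr : 0 < p * q * n - 1) (j : ℤ) :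
    brieskornDelta p q n p' q' j = 1 + 2 * j + (-(j * p')) / p + (-(j * q')) / q
      + (-(j * (p * q * n - n - 1))) / (p * q * n - 1) := by
  have h1 := Rat.ceil_intCast_div_intCast (a := j * p') hp
  have h2 := Rat.ceil_intCast_div_intCast (a := j * q') hq
  have h3 := Rat.ceil_intCast_div_intCast (a := j * (p * q * n - n - 1)) hr
  push_cast at h1 h2 h3
  rw [brieskornDelta, h1, h2, h3]
  ring

lemma brieskornDelta_pq_mul_sub (hp : 0 < p) (hq : 0 < q) (hr : 0 < p * q * n - 1)
    (hkey : p' * q + q' * p = p * q + 1) (t s : ℤ) :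
    brieskornDelta p q n p' q' (p * q * t - s)
      = 1 - s + s * p' / p + s * q' / q + (t - s * n) / (p * q * n - 1) := by
  have h1 : -((p * q * t - s) * p') / p = s * p' / p + -(q * t * p') := by
    rw [show -((p * q * t - s) * p') = s * p' + -(q * t * p') * p by ring,
      Int.add_mul_ediv_right _ _ hp.ne']
  have h2 : -((p * q * t - s) * q') / q = s * q' / q + -(p * t * q') := by
    rw [show -((p * q * t - s) * q') = s * q' + -(p * t * q') * q by ring,
      Int.add_mul_ediv_right _ _ hq.ne']
  have h3 : -((p * q * t - s) * (p * q * n - n - 1)) / (p * q * n - 1)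
      = (t - s * n) / (p * q * n - 1) + (t - (p * q * t - s)) := by
    rw [show -((p * q * t - s) * (p * q * n - n - 1))
        = (t - s * n) + (t - (p * q * t - s)) * (p * q * n - 1) by ring,
      Int.add_mul_ediv_right _ _ hr.ne']
  rw [brieskornDelta_eq_ediv hp hq hr, h1, h2, h3]
  linear_combination (-t) * hkey

open Classical in
lemma brieskornDelta_pq_mul_sub_of_lt (hp : 0 < p) (hq : 0 < q) (hr : 0 < p * q * n - 1)
    (hkey : p' * q + q' * p = p * q + 1) (t : ℤ) {s : ℤ} (hs0 : 0 ≤ s) (hs : s < p * q) :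
    brieskornDelta p q n p' q' (p * q * t - s)
      = (if s ∈ Spq p q then 1 else 0) + (t - s * n) / (p * q * n - 1) := by
  have := Spq.ediv_add_ediv_eq hp hq hkey hs0 hs
  rw [brieskornDelta_pq_mul_sub hp hq hr hkey]
  split_ifs at this ⊢ <;> linarith

end Delta

lemma brieskornTau_eq_sum_Ico (p q n p' q' k : ℤ) :
    brieskornTau p q n p' q' k = ∑ j ∈ Ico 0 k, brieskornDelta p q n p' q' j := by
  refine sum_nbij' (fun j : ℕ => (j : ℤ)) Int.toNat ?_ ?_ ?_ ?_ (fun _ _ => rfl) <;>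
    intro j hj <;> simp at hj ⊢ <;> omega

lemma brieskornTau_sub_eq_sum_Ico (p q n p' q' : ℤ) {a b : ℤ} (ha : 0 ≤ a) (hab : a ≤ b) :
    brieskornTau p q n p' q' b - brieskornTau p q n p' q' a
      = ∑ j ∈ Ico a b, brieskornDelta p q n p' q' j := by
  rw [brieskornTau_eq_sum_Ico, brieskornTau_eq_sum_Ico, ← Ico_union_Ico_eq_Ico ha hab,
    sum_union (Ico_disjoint_Ico_consecutive 0 a b)]
  ring

lemma Int.sum_Ico_reflect {M : Type*} [AddCommMonoid M] (f : ℤ → M) (c a b : ℤ) :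
    ∑ j ∈ Ico a b, f j = ∑ s ∈ Ico (c + 1 - b) (c + 1 - a), f (c - s) := by
  refine sum_nbij' (c - ·) (c - ·) ?_ ?_ ?_ ?_ ?_ <;> intro j hj <;>
    simp at hj ⊢ <;> omega

section Branches

variable {p q n p' q' : ℤ}

open Classical in
lemma brieskornTau_sub_of_mul_le (hp : 0 < p) (hq : 0 < q) (hn : 0 < n)
    (hkey : p' * q + q' * p = p * q + 1) {t m : ℤ} (hm : 0 ≤ m) (hmt : m * n ≤ t)
    (htr : t < p * q * n - 1) :
    brieskornTau p q n p' q' (p * q * t + 1) - brieskornTau p q n p' q' (p * q * t - m)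
      = #{s ∈ Ico 0 (m + 1) | s ∈ Spq p q} := by
  have hr : 0 < p * q * n - 1 := by nlinarith
  have hmpq : m < p * q := by nlinarith
  have hmt' : m ≤ p * q * t := by nlinarith
  rw [brieskornTau_sub_eq_sum_Ico _ _ _ _ _ (by omega) (by omega),
    Int.sum_Ico_reflect _ (p * q * t), show p * q * t + 1 - (p * q * t + 1) = 0 by ring,
    show p * q * t + 1 - (p * q * t - m) = m + 1 by ring, natCast_card_filter]
  refine sum_congr rfl fun s hs => ?_
  rw [mem_Ico] at hs
  have hcorr : (t - s * n) / (p * q * n - 1) = 0 :=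
    (Int.ediv_eq_iff_of_pos hr).2 ⟨by nlinarith, by nlinarith⟩
  rw [brieskornDelta_pq_mul_sub_of_lt hp hq hr hkey t hs.1 (by omega), hcorr, add_zero]

open Classical in
lemma brieskornTau_sub_of_lt_mul (hp : 0 < p) (hq : 0 < q) (hn : 0 < n)
    (hkey : p' * q + q' * p = p * q + 1) {t m : ℤ} (hm0 : 0 ≤ m) (hm : m < p * q) (ht : 1 ≤ t)
    (htm : t < (m + 1) * n) :
    brieskornTau p q n p' q' (p * q * (t - 1) + 1) - brieskornTau p q n p' q' (p * q * t - m)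
      = #{s ∈ Ico (m + 1) (p * q) | s ∉ Spq p q} := by
  have hr : 0 < p * q * n - 1 := by nlinarith
  have hab : p * q * (t - 1) + 1 ≤ p * q * t - m := by nlinarith
  have hsum := brieskornTau_sub_eq_sum_Ico p q n p' q' (by nlinarith) hab
  rw [Int.sum_Ico_reflect _ (p * q * t), show p * q * t + 1 - (p * q * t - m) = m + 1 by ring,
    show p * q * t + 1 - (p * q * (t - 1) + 1) = p * q by ring] at hsum
  rw [natCast_card_filter, ← neg_sub, hsum, ← sum_neg_distrib]
  refine sum_congr rfl fun s hs => ?_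
  rw [mem_Ico] at hs
  have hcorr : (t - s * n) / (p * q * n - 1) = -1 :=
    (Int.ediv_eq_iff_of_pos hr).2 ⟨by nlinarith, by nlinarith⟩
  rw [brieskornDelta_pq_mul_sub_of_lt hp hq hr hkey t (by omega) hs.2, hcorr]
  split_ifs <;> simp_all

end Branches

section Gaps

variable {p q : ℤ}

open Classical in
lemma gapAlpha_eq_card_filter (hp : 0 < p) (hq : 0 < q) (hpq : IsCoprime p q) {c u : ℤ}
    (hc : -1 ≤ c) (hu : p * q - p - q < u) :
    gapAlpha p q c = #{s ∈ Ico (c + 1) u | s ∉ Spq p q} := by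
  rw [gapAlpha, ← Set.ncard_coe_finset]
  congr 1
  ext s
  simp only [Set.mem_ofPred_eq, coe_filter, mem_Ico]
  constructor
  · rintro ⟨hs0, hs, hcs⟩
    refine ⟨⟨by omega, ?_⟩, hs⟩
    by_contra! hus
    exact hs (Spq.mem_of_lt hp hq hpq (by omega))
  · rintro ⟨⟨hcs, -⟩, hs⟩
    exact ⟨by omega, hs, by omega⟩

open Classical in
lemma Spq.card_filter_mem_eq_card_filter_not_mem (hp : 0 < p) (hq : 0 < q) (hpq : IsCoprime p q)
    {a b c d : ℤ} (had : a + d = p * q - p - q + 1) (hbc : b + c = p * q - p - q + 1) :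
    #{s ∈ Ico a b | s ∈ Spq p q} = #{s ∈ Ico c d | s ∉ Spq p q} := by
  refine card_nbij' (p * q - p - q - ·) (p * q - p - q - ·) ?_ ?_ ?_ ?_ <;> intro s hs <;>
    simp only [mem_coe, mem_filter, mem_Ico] at hs ⊢
  · exact ⟨by omega, (Spq.mem_iff_not_mem_sub hp hq hpq s).1 hs.2⟩
  · refine ⟨by omega, (Spq.mem_iff_not_mem_sub hp hq hpq _).2 ?_⟩
    rw [sub_sub_cancel]
    exact hs.2
  · ring
  · ring

end Gaps

/-- Symmetry of branch lengths for the graded root of `Σ(p,q,pqn-1)` (coprime `p,q ≥ 2`,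
`n ≥ 1`), with `g = (p-1)(q-1)/2`, `M_i = pqi + 1`, `m_i = pqi - ⌊i/n⌋` and
`α_i = #{s ∉ S_{p,q} : s > i}`: for `0 ≤ k ≤ g-2` and `nk ≤ i < nk + n`,
`τ(M_{n(g-1)-1-i}) - τ(m_{n(g-1)-1-i}) = α_{g+k}` and `τ(M_{ng+i-1}) - τ(m_{ng+i}) = α_{g+k}`. -/
theorem brieskornTau_branch_symmetry (p q n p' q' : ℤ) (hp : 2 ≤ p) (hq : 2 ≤ q)
    (hpq : IsCoprime p q) (hn : 1 ≤ n)
    (hp'0 : 0 < p') (hp'p : p' < p) (hq'0 : 0 < q') (hq'q : q' < q)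
    (hp' : q * p' ≡ 1 [ZMOD p]) (hq' : p * q' ≡ 1 [ZMOD q])
    (g : ℤ) (hg : 2 * g = (p - 1) * (q - 1))
    (k : ℤ) (hk0 : 0 ≤ k) (hkg : k ≤ g - 2)
    (i : ℤ) (hi1 : n * k ≤ i) (hi2 : i < n * k + n) :
    brieskornTau p q n p' q' (p * q * (n * (g - 1) - 1 - i) + 1)
        - brieskornTau p q n p' q'
            (p * q * (n * (g - 1) - 1 - i) - (n * (g - 1) - 1 - i) / n)
      = (gapAlpha p q (g + k) : ℤ) ∧
    brieskornTau p q n p' q' (p * q * (n * g + i - 1) + 1)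
        - brieskornTau p q n p' q' (p * q * (n * g + i) - (n * g + i) / n)
      = (gapAlpha p q (g + k) : ℤ) := by
  have hp0 : 0 < p := by omega
  have hq0 : 0 < q := by omega
  have hn0 : 0 < n := by omega
  have hkey := mul_add_mul_eq_mul_add_one hpq hp'0 hp'p hq'0 hq'q hp' hq'
  have hF : p * q - p - q = 2 * g - 1 := by linarith
  have hnk : 0 ≤ n * k := by positivity
  have hgpq : g < p * q := by nlinarith
  constructor
  · have hdiv : (n * (g - 1) - 1 - i) / n = g - k - 2 :=
      (Int.ediv_eq_iff_of_pos hn0).2 ⟨by linarith, by linarith⟩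
    rw [hdiv, brieskornTau_sub_of_mul_le hp0 hq0 hn0 hkey (by omega) (by linarith) (by nlinarith),
      Spq.card_filter_mem_eq_card_filter_not_mem hp0 hq0 hpq (c := g + k + 1) (d := 2 * g)
        (by omega) (by omega),
      gapAlpha_eq_card_filter hp0 hq0 hpq (u := 2 * g) (by omega) (by omega)]
  · have hdiv : (n * g + i) / n = g + k :=
      (Int.ediv_eq_iff_of_pos hn0).2 ⟨by linarith, by linarith⟩
    rw [hdiv, brieskornTau_sub_of_lt_mul hp0 hq0 hn0 hkey (by omega) (by omega) (by nlinarith)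
      (by linarith), gapAlpha_eq_card_filter hp0 hq0 hpq (u := p * q) (by omega) (by omega)]
end

section
/- Let p,q ≥ 2 be coprime integers, n ≥ 1 an integer, and let τ be the tau function of Σ(p,q,pqn-1). Then for every integer i with n(g-1) ≤ i ≤ ng - 2, one has τ(M_i) - τ(m_i) = α_{g-1} and 2τ(m_i) = -2α_{g-1} + g(n - ng + 2) (there is a 'bunch' of n leaves at the bottom level of the graded root). -/
/-- decidable indicator of membership in `Spq` (via the membership criterion). -/
def chi (p q p' s : ℤ) : ℤ := if q * ((s * p') % p) ≤ s then 1 else 0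

lemma ceil_eval (a b k r : ℤ) (hb : 0 < b) (h : a = b*k - r) (h0 : 0 ≤ r) (h1 : r < b) :
    ⌈(a:ℚ)/(b:ℚ)⌉ = k := by
  have hb' : (0:ℚ) < (b:ℚ) := by exact_mod_cast hb
  have h0' : (0:ℚ) ≤ (r:ℚ) := by exact_mod_cast h0
  have h1' : (r:ℚ) < (b:ℚ) := by exact_mod_cast h1
  rw [Int.ceil_eq_iff]
  constructor
  · rw [lt_div_iff₀ hb']; push_cast [h]; linarith
  · rw [div_le_iff₀ hb']; push_cast [h]; linarith



lemma inv_sum (p q p' q' : ℤ) (hp : 2 ≤ p) (hq : 2 ≤ q) (hpq : IsCoprime p q)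
    (hp'0 : 0 < p') (hp'p : p' < p) (hq'0 : 0 < q') (hq'q : q' < q)
    (hp' : q * p' ≡ 1 [ZMOD p]) (hq' : p * q' ≡ 1 [ZMOD q]) :
    q * p' + p * q' = p * q + 1 := by
  have h1 : p ∣ (q * p' + p * q' - 1) := by
    have ha := hp'.symm.dvd
    have hb : p ∣ p * q' := Dvd.intro q' rfl
    have : q * p' + p * q' - 1 = (q * p' - 1) + p * q' := by ring
    rw [this]; exact dvd_add ha hb
  have h2 : q ∣ (q * p' + p * q' - 1) := by
    have ha := hq'.symm.dvd
    have hb : q ∣ q * p' := Dvd.intro p' rfl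
    have : q * p' + p * q' - 1 = (p * q' - 1) + q * p' := by ring
    rw [this]; exact dvd_add ha hb
  have h3 : p * q ∣ (q * p' + p * q' - 1) := hpq.mul_dvd h1 h2
  rcases h3 with ⟨c, hc⟩
  have hb1 : q * p' + p * q' - 1 ≤ 2 * (p*q) - p - q - 1 := by nlinarith
  have hb2 : 0 < q * p' + p * q' - 1 := by nlinarith
  have hpq0 : 0 < p * q := by positivity
  have hc1 : c ≤ 1 := by nlinarith
  have hc2 : 1 ≤ c := by nlinarith
  have : c = 1 := le_antisymm hc1 hc2
  rw [this] at hc; linarith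

lemma crit (p q p' : ℤ) (hp : 0 < p) (hq : 0 < q)
    (hp' : q * p' ≡ 1 [ZMOD p]) (s : ℤ) (hs : 0 ≤ s) :
    s ∈ Spq p q ↔ q * ((s * p') % p) ≤ s := by
  have hdvd : p ∣ s - q * ((s * p') % p) := by
    have h2 : q * (s * p' % p) ≡ q * (s * p') [ZMOD p] :=
      Int.ModEq.mul_left q (Int.mod_modEq (s * p') p)
    have h3 : q * (s * p') ≡ s [ZMOD p] := by
      calc q * (s * p') = (q * p') * s := by ring
        _ ≡ 1 * s [ZMOD p] := Int.ModEq.mul_right s hp'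
        _ = s := by rw [one_mul]
    exact (h2.trans h3).dvd
  constructor
  · rintro ⟨a, b, ha, hb, rfl⟩
    set B := ((a * p + b * q) * p') % p with hB
    have hB0 : 0 ≤ B := Int.emod_nonneg _ (by omega)
    have hBp : B < p := Int.emod_lt_of_pos _ hp
    have hBb : p ∣ b - B := by
      have heq : q * (b - B) = (b*q - (a*p+b*q)) + ((a*p+b*q) - q * B) := by ring
      have hd : p ∣ q * (b - B) := by
        rw [heq]; exact dvd_add ⟨-a, by ring⟩ hdvd
      have hcop : IsCoprime p q := by
        rcases hp'.symm.dvd with ⟨c, hc⟩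
        exact ⟨-c, p', by linarith⟩
      exact (hcop.dvd_of_dvd_mul_left hd)
    have hbB : B ≤ b := by
      rcases hBb with ⟨c, hc⟩
      by_contra hcon
      push_neg at hcon
      have hc0 : c < 0 := by nlinarith
      have : p * c ≤ p * (-1) := by
        apply mul_le_mul_of_nonneg_left _ (le_of_lt hp); omega
      omega
    nlinarith
  · intro h
    refine ⟨(s - q * ((s * p') % p)) / p, (s * p') % p, ?_, Int.emod_nonneg _ (by omega), ?_⟩
    · apply Int.ediv_nonneg _ (by omega); omega
    · rw [Int.ediv_mul_cancel hdvd]; ring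


lemma dvd_sub_crit (p q p' : ℤ) (hp : 0 < p) (hp' : q * p' ≡ 1 [ZMOD p]) (s : ℤ) :
    p ∣ s - q * ((s * p') % p) := by
  have h2 : q * (s * p' % p) ≡ q * (s * p') [ZMOD p] :=
    Int.ModEq.mul_left q (Int.mod_modEq (s * p') p)
  have h3 : q * (s * p') ≡ s [ZMOD p] := by
    calc q * (s * p') = (q * p') * s := by ring
      _ ≡ 1 * s [ZMOD p] := Int.ModEq.mul_right s hp'
      _ = s := by rw [one_mul]
  exact (h2.trans h3).dvd

lemma repR (p q n p' q' : ℤ) (hp : 2 ≤ p) (hq : 2 ≤ q) (hpq : IsCoprime p q)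
    (hp'0 : 0 < p') (hp'p : p' < p) (hq'0 : 0 < q') (hq'q : q' < q)
    (hp' : q * p' ≡ 1 [ZMOD p]) (hq' : p * q' ≡ 1 [ZMOD q])
    (hsum : q * p' + p * q' = p * q + 1)
    (s : ℤ) (hs0 : 0 ≤ s) (hs1 : s < p * q) :
    (s * p') / p + (s * q') / q = s - 1 + chi p q p' s := by
  have hp0 : (0:ℤ) < p := by omega
  have hq0 : (0:ℤ) < q := by omega
  set B := (s * p') % p with hBdef
  set A := (s * q') % q with hAdef
  have hu := Int.mul_ediv_add_emod (s * p') p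
  have hv := Int.mul_ediv_add_emod (s * q') q
  have hB0 : 0 ≤ B := Int.emod_nonneg _ (by omega)
  have hBp : B < p := Int.emod_lt_of_pos _ hp0
  have hA0 : 0 ≤ A := Int.emod_nonneg _ (by omega)
  have hAq : A < q := Int.emod_lt_of_pos _ hq0
  have hdB : p ∣ s - q * B := dvd_sub_crit p q p' hp0 hp' s
  have hdA : q ∣ s - p * A := dvd_sub_crit q p q' hq0 hq' s
  -- q*B + p*A - s is divisible by p*q
  have hd : p * q ∣ q * B + p * A - s := by
    apply hpq.mul_dvd
    · have : q * B + p * A - s = -(s - q*B) + p * A := by ring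
      rw [this]; exact dvd_add (dvd_neg.2 hdB) ⟨A, rfl⟩
    · have : q * B + p * A - s = -(s - p*A) + q * B := by ring
      rw [this]; exact dvd_add (dvd_neg.2 hdA) ⟨B, by ring⟩
  rcases hd with ⟨c, hc⟩
  have hc01 : c = 0 ∨ c = 1 := by
    have h1 : q * B + p * A - s > -(p*q) := by nlinarith
    have h2 : q * B + p * A - s < 2 * (p*q) := by nlinarith
    have hpq0 : 0 < p * q := by positivity
    have : c > -1 := by nlinarith
    have : c < 2 := by nlinarith
    omega
  have key : q * B + p * A = s + p * q * (1 - chi p q p' s) := by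
    unfold chi
    rw [← hBdef]
    by_cases hcase : q * B ≤ s
    · simp only [hcase, if_true]
      rcases hc01 with rfl | rfl
      · linarith [hc]
      · exfalso
        rcases hdB with ⟨a, ha⟩
        have hpa : 0 ≤ p * a := by linarith
        have ha0 : 0 ≤ a := by nlinarith
        have haq : a < q := by nlinarith
        have h6 : p * (a - A) = (s - q * B) - p * A := by rw [ha]; ring
        have h7 : p * (a - A) = -(p * q) := by linarith
        have hd : q ∣ p * (a - A) := ⟨-p, by rw [h7]; ring⟩
        rcases hpq.symm.dvd_of_dvd_mul_left hd with ⟨d, hd2⟩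
        have h8 : q * d < q * 1 := by linarith
        have h9 : q * (-1) < q * d := by linarith
        have hd1 : d < 1 := lt_of_mul_lt_mul_left h8 (by omega)
        have hdm : -1 < d := lt_of_mul_lt_mul_left h9 (by omega)
        have hd0 : d = 0 := by omega
        rw [hd0, mul_zero] at hd2
        have : a - A = 0 := hd2
        rw [this, mul_zero] at h7
        nlinarith
    · simp only [hcase, if_false]
      push_neg at hcase
      rcases hc01 with rfl | rfl
      · exfalso
        have hpA : 0 ≤ p * A := mul_nonneg (by omega) hA0
        linarith [hc]
      · linarith [hc]
  -- now conclude
  have main : p * q * ((s * p')/p + (s * q')/q) = p * q * (s - 1 + chi p q p' s) := by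
    have e1 : p * q * ((s * p')/p + (s * q')/q)
        = q * (p * ((s*p')/p)) + p * (q * ((s*q')/q)) := by ring
    have e2 : p * ((s*p')/p) = s * p' - B := by omega
    have e3 : q * ((s*q')/q) = s * q' - A := by omega
    rw [e1, e2, e3]
    have : q * (s * p' - B) + p * (s * q' - A) = s * (q * p' + p * q') - (q*B + p*A) := by ring
    rw [this, hsum, key]; ring
  have hpq0 : p * q ≠ 0 := by positivity
  exact mul_left_cancel₀ hpq0 main


lemma delta_zero (p q n p' q' : ℤ) : brieskornDelta p q n p' q' 0 = 1 := by
  simp [brieskornDelta]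

lemma delta_eq (p q n p' q' : ℤ) (hp : 2 ≤ p) (hq : 2 ≤ q) (hpq : IsCoprime p q) (hn : 1 ≤ n)
    (hp'0 : 0 < p') (hp'p : p' < p) (hq'0 : 0 < q') (hq'q : q' < q)
    (hp' : q * p' ≡ 1 [ZMOD p]) (hq' : p * q' ≡ 1 [ZMOD q])
    (hsum : q * p' + p * q' = p * q + 1)
    (t s : ℤ) (ht1 : 1 ≤ t) (htN : t < p * q * n - 1) (hs0 : 0 ≤ s) (hs1 : s < p * q) :
    brieskornDelta p q n p' q' (p * q * t - s)
      = chi p q p' s - (if t < s * n then 1 else 0) := by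
  have hp0 : (0:ℤ) < p := by omega
  have hq0 : (0:ℤ) < q := by omega
  set u := (s * p') / p with hudef
  set B := (s * p') % p with hBdef
  set v := (s * q') / q with hvdef
  set A := (s * q') % q with hAdef
  have hu := Int.mul_ediv_add_emod (s * p') p
  have hv := Int.mul_ediv_add_emod (s * q') q
  have hB0 : 0 ≤ B := Int.emod_nonneg _ (by omega)
  have hBp : B < p := Int.emod_lt_of_pos _ hp0
  have hA0 : 0 ≤ A := Int.emod_nonneg _ (by omega)
  have hAq : A < q := Int.emod_lt_of_pos _ hq0
  have c1 : ⌈(((p * q * t - s) * p' : ℤ) : ℚ) / ((p : ℤ) : ℚ)⌉ = q * t * p' - u :=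
    ceil_eval ((p * q * t - s) * p') p (q * t * p' - u) B hp0 (by linear_combination hu) hB0 hBp
  have c2 : ⌈(((p * q * t - s) * q' : ℤ) : ℚ) / ((q : ℤ) : ℚ)⌉ = p * t * q' - v :=
    ceil_eval ((p * q * t - s) * q') q (p * t * q' - v) A hq0 (by linear_combination hv) hA0 hAq
  set N := p * q * n - 1 with hNdef
  have hN0 : 0 < N := by nlinarith
  set w : ℤ := if t < s * n then 1 else 0 with hwdef
  have hsn : s * n ≤ (p*q - 1) * n := by
    apply mul_le_mul_of_nonneg_right (by omega) (by omega)
  have hexp : (p*q - 1) * n = p * q * n - n := by ring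
  have hsn0 : 0 ≤ s * n := mul_nonneg hs0 (by omega)
  have c3 : ⌈(((p * q * t - s) * (p * q * n - n - 1) : ℤ) : ℚ) / (((p * q * n - 1 : ℤ)) : ℚ)⌉
      = p * q * t - s - t + w := by
    apply ceil_eval _ _ _ (N * w + t - s * n) hN0 _ _ _
    · rw [hNdef, hwdef]; split_ifs <;> ring
    · rw [hwdef]; split_ifs with h
      · have h2 : s * n - t ≤ N - n := by omega
        omega
      · simp only [mul_zero]; omega
    · rw [hwdef]; split_ifs with h
      · omega
      · simp only [mul_zero]; omega
  unfold brieskornDelta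
  norm_cast
  rw [Rat.divInt_eq_div, Rat.divInt_eq_div, Rat.divInt_eq_div, c1, c2, c3]
  have hrep : u + v = s - 1 + chi p q p' s :=
    repR p q n p' q' hp hq hpq hp'0 hp'p hq'0 hq'q hp' hq' hsum s hs0 hs1
  linear_combination hrep - t * hsum


lemma crit_short (p q p' : ℤ) (hp : 2 ≤ p) (hp' : q * p' ≡ 1 [ZMOD p]) (s : ℤ) (h : ¬ q * ((s * p') % p) ≤ s) :
    s ≤ q * ((s * p') % p) - p := by
  push_neg at h
  rcases dvd_sub_crit p q p' (by omega) hp' s with ⟨c, hc⟩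
  have hc0 : c < 0 := by nlinarith
  have : p * c ≤ p * (-1) := mul_le_mul_of_nonneg_left (by omega) (by omega)
  omega

lemma chi_frob (p q p' : ℤ) (hp : 2 ≤ p) (hq : 2 ≤ q) (hp' : q * p' ≡ 1 [ZMOD p]) (s : ℤ) (h : p * q - p - q < s) : chi p q p' s = 1 := by
  unfold chi
  by_contra hcon
  by_cases hcase : q * ((s * p') % p) ≤ s
  · simp [hcase] at hcon
  · have h2 := crit_short p q p' hp hp' s hcase
    have hB : (s * p') % p < p := Int.emod_lt_of_pos _ (by omega)
    have : q * ((s * p') % p) ≤ q * (p - 1) := mul_le_mul_of_nonneg_left (by omega) (by omega)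
    nlinarith

lemma chi_sym (p q p' : ℤ) (hp : 2 ≤ p) (hq : 2 ≤ q) (hp' : q * p' ≡ 1 [ZMOD p]) (s : ℤ) (hs0 : 0 ≤ s) (hsF : s ≤ p * q - p - q) :
    chi p q p' s + chi p q p' (p * q - p - q - s) = 1 := by
  have hp0 : (0:ℤ) < p := by omega
  set F := p * q - p - q with hF
  set B := (s * p') % p with hB
  have hB0 : 0 ≤ B := Int.emod_nonneg _ (by omega)
  have hBp : B < p := Int.emod_lt_of_pos _ hp0
  -- B' = p - 1 - B
  have hB' : ((F - s) * p') % p = p - 1 - B := by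
    have hmeq : (F - s) * p' ≡ p - 1 - B [ZMOD p] := by
      rcases hp'.symm.dvd with ⟨k, hk⟩
      have hu := Int.mul_ediv_add_emod (s * p') p
      rw [← hB] at hu
      rw [Int.modEq_iff_dvd]
      exact ⟨1 - (q - 1) * p' + k + s * p' / p, by linear_combination (-p') * hF + hk - hu⟩
    have := hmeq.symm
    unfold Int.ModEq at this
    rw [← this, Int.emod_eq_of_lt (by omega) (by omega)]
  have hdB := dvd_sub_crit p q p' hp0 hp' s
  unfold chi
  rw [hB', ← hB]
  by_cases hcase : q * B ≤ s
  · have h2 : ¬ (q * (p - 1 - B) ≤ F - s) := by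
      push_neg
      have hexp : q * (p - 1 - B) = p * q - q - q * B := by ring
      omega
    simp [hcase, h2]
  · have h2 : q * (p - 1 - B) ≤ F - s := by
      have h3 := crit_short p q p' hp hp' s hcase
      rw [← hB] at h3
      have hexp : q * (p - 1 - B) = p * q - q - q * B := by ring
      omega
    simp [hcase, h2]


lemma sum_chi_twog (p q p' g : ℤ) (hp : 2 ≤ p) (hq : 2 ≤ q) (hp' : q * p' ≡ 1 [ZMOD p])
    (hg : 2 * g = (p - 1) * (q - 1)) :
    ∑ x ∈ Finset.range (2 * g).toNat, chi p q p' (x : ℤ) = g := by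
  have hg1 : 1 ≤ g := by nlinarith
  have hD : ((2 * g).toNat : ℤ) = 2 * g := Int.toNat_of_nonneg (by omega)
  have hF : p * q - p - q = 2 * g - 1 := by nlinarith
  have refl := Finset.sum_range_reflect (fun x => chi p q p' (x : ℤ)) (2 * g).toNat
  have key : ∀ x ∈ Finset.range (2 * g).toNat,
      chi p q p' ((2 * g).toNat - 1 - x : ℕ) = 1 - chi p q p' (x : ℤ) := by
    intro x hx
    rw [Finset.mem_range] at hx
    have hx' : (x : ℤ) < 2 * g := by omega
    have hcast : (((2 * g).toNat - 1 - x : ℕ) : ℤ) = p * q - p - q - x := by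
      rw [hF]; omega
    rw [hcast]
    have := chi_sym p q p' hp hq hp' (x : ℤ) (by positivity) (by omega)
    omega
  rw [Finset.sum_congr rfl key] at refl
  rw [Finset.sum_sub_distrib] at refl
  simp only [Finset.sum_const, Finset.card_range, nsmul_eq_mul, mul_one] at refl
  omega

lemma sum_chi_pq (p q p' g : ℤ) (hp : 2 ≤ p) (hq : 2 ≤ q) (hp' : q * p' ≡ 1 [ZMOD p])
    (hg : 2 * g = (p - 1) * (q - 1)) :
    ∑ x ∈ Finset.range (p * q).toNat, chi p q p' (x : ℤ) = p * q - g := by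
  have hg1 : 1 ≤ g := by nlinarith
  have hF : p * q - p - q = 2 * g - 1 := by nlinarith
  have hsplit : (p * q).toNat = (2 * g).toNat + (p * q - 2 * g).toNat := by
    have h1 : 2 * g < p * q := by nlinarith
    omega
  rw [hsplit, Finset.sum_range_add, sum_chi_twog p q p' g hp hq hp' hg]
  have key : ∀ x ∈ Finset.range (p * q - 2 * g).toNat,
      chi p q p' (((2 * g).toNat + x : ℕ) : ℤ) = 1 := by
    intro x hx
    apply chi_frob p q p' hp hq hp'
    have : ((2 * g).toNat : ℤ) = 2 * g := Int.toNat_of_nonneg (by omega)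
    push_cast
    omega
  rw [Finset.sum_congr rfl key]
  simp only [Finset.sum_const, Finset.card_range, nsmul_eq_mul, mul_one]
  have h1 : 2 * g < p * q := by nlinarith
  omega

lemma sum_chi_g (p q p' g : ℤ) (hp : 2 ≤ p) (hq : 2 ≤ q) (hqq : IsCoprime p q)
    (hp' : q * p' ≡ 1 [ZMOD p]) (hg : 2 * g = (p - 1) * (q - 1)) :
    ∑ x ∈ Finset.range g.toNat, chi p q p' (x : ℤ) = (gapAlpha p q (g - 1) : ℤ) := by
  classical
  have hg1 : 1 ≤ g := by nlinarith
  have hF : p * q - p - q = 2 * g - 1 := by nlinarith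
  have hp0 : (0:ℤ) < p := by omega
  have hq0 : (0:ℤ) < q := by omega
  set T := (Finset.range g.toNat).filter (fun x : ℕ => q * (((x:ℤ) * p') % p) ≤ (x:ℤ)) with hT
  have hsum : ∑ x ∈ Finset.range g.toNat, chi p q p' (x : ℤ) = (T.card : ℤ) := by
    rw [hT, Finset.card_filter]
    push_cast
    exact Finset.sum_congr rfl fun x _ => by unfold chi; split_ifs <;> simp
  rw [hsum]
  congr 1
  -- gapAlpha = card of image of T under x ↦ 2g-1-x
  unfold gapAlpha
  have hset : {s : ℤ | 0 ≤ s ∧ s ∉ Spq p q ∧ g - 1 < s}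
      = ↑(T.image (fun x : ℕ => 2 * g - 1 - (x : ℤ))) := by
    ext ξ
    simp only [Set.mem_setOf_eq, Finset.coe_image, Set.mem_image, Finset.mem_coe, hT,
      Finset.mem_filter, Finset.mem_range]
    constructor
    · rintro ⟨h0, hnot, hgt⟩
      have hle : ξ ≤ 2 * g - 1 := by
        by_contra hcon
        push_neg at hcon
        apply hnot
        rw [crit p q p' hp0 hq0 hp' ξ h0]
        have := chi_frob p q p' hp hq hp' ξ (by omega)
        unfold chi at this
        by_contra h2
        rw [if_neg h2] at this
        exact one_ne_zero this.symm
      refine ⟨(2 * g - 1 - ξ).toNat, ⟨?_, ?_⟩, ?_⟩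
      · omega
      · have hxc : (((2 * g - 1 - ξ).toNat : ℤ)) = 2 * g - 1 - ξ := Int.toNat_of_nonneg (by omega)
        rw [hxc]
        have hsym := chi_sym p q p' hp hq hp' (2 * g - 1 - ξ) (by omega) (by omega)
        have hs2 : p * q - p - q - (2 * g - 1 - ξ) = ξ := by omega
        rw [hs2] at hsym
        have hchix : chi p q p' ξ = 0 := by
          unfold chi
          rw [if_neg]
          intro hcrit
          exact hnot ((crit p q p' hp0 hq0 hp' ξ h0).2 hcrit)
        have h1 : chi p q p' (2 * g - 1 - ξ) = 1 := by omega
        unfold chi at h1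
        by_contra h2
        rw [if_neg h2] at h1
        exact one_ne_zero h1.symm
      · omega
    · rintro ⟨x, ⟨hxg, hcrit⟩, rfl⟩
      have hxg' : (x : ℤ) ≤ g - 1 := by omega
      refine ⟨by omega, ?_, by omega⟩
      intro hmem
      have hc2 := (crit p q p' hp0 hq0 hp' _ (by omega)).1 hmem
      have hsym := chi_sym p q p' hp hq hp' (x : ℤ) (by positivity) (by omega)
      have hs2 : p * q - p - q - (x:ℤ) = 2 * g - 1 - (x:ℤ) := by omega
      rw [hs2] at hsym
      unfold chi at hsym
      rw [if_pos hcrit, if_pos hc2] at hsym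
      omega
  rw [hset, Set.ncard_coe_finset, Finset.card_image_of_injOn]
  intro a _ b _ hab
  dsimp only at hab
  omega


lemma ind_count (c P : ℕ) (h : c ≤ P) :
    ∑ s ∈ Finset.range P, (if c ≤ s then (1:ℤ) else 0) = (P:ℤ) - c := by
  induction P with
  | zero =>
    rw [Finset.range_zero, Finset.sum_empty]
    omega
  | succ m ih =>
    rw [Finset.sum_range_succ]
    rcases Nat.lt_or_ge m c with h2 | h2
    · have hcm : c = m + 1 := by omega
      subst hcm
      have hz : ∑ s ∈ Finset.range (m+1), (if m+1 ≤ s then (1:ℤ) else 0) = 0 :=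
        Finset.sum_eq_zero fun x hx => by
          rw [Finset.mem_range] at hx; rw [if_neg (by omega)]
      rw [Finset.sum_range_succ] at hz
      rw [hz]
      push_cast; ring
    · rw [ih h2, if_pos (by omega)]; push_cast; ring

lemma sum_w (n t : ℤ) (hn : 1 ≤ n) (ht : 0 ≤ t) (P : ℕ) (hP : t / n < (P:ℤ)) :
    ∑ s ∈ Finset.range P, (if t < (s:ℤ) * n then (1:ℤ) else 0) = (P:ℤ) - 1 - t / n := by
  have hK0 : 0 ≤ t / n := Int.ediv_nonneg ht (by omega)
  have hcond : ∀ s : ℕ, (t < (s:ℤ) * n) ↔ ((t / n).toNat + 1 ≤ s) := by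
    intro s
    rw [← Int.ediv_lt_iff_lt_mul (by omega : (0:ℤ) < n)]
    omega
  calc ∑ s ∈ Finset.range P, (if t < (s:ℤ) * n then (1:ℤ) else 0)
      = ∑ s ∈ Finset.range P, (if (t / n).toNat + 1 ≤ s then (1:ℤ) else 0) :=
        Finset.sum_congr rfl fun s _ => if_congr (hcond s) rfl rfl
    _ = (P:ℤ) - ((t / n).toNat + 1) := ind_count _ _ (by omega)
    _ = (P:ℤ) - 1 - t / n := by push_cast; omega

lemma sum_floor (n : ℤ) (hn : 1 ≤ n) (m : ℕ) :
    2 * (∑ x ∈ Finset.range m, ((x:ℤ)+1) / n)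
      = 2 * ((m:ℤ)+1) * ((m:ℤ)/n) - n * ((m:ℤ)/n) * ((m:ℤ)/n + 1) := by
  induction m with
  | zero => simp
  | succ m ih =>
    rw [Finset.sum_range_succ, mul_add, ih]
    have hme := Int.mul_ediv_add_emod ((m:ℤ)+1) n
    have hr0 : 0 ≤ ((m:ℤ)+1) % n := Int.emod_nonneg _ (by omega)
    have hrn : ((m:ℤ)+1) % n < n := Int.emod_lt_of_pos _ (by omega)
    set k' := ((m:ℤ)+1) / n with hk'
    set r := ((m:ℤ)+1) % n with hr
    have hmcast : ((m+1 : ℕ):ℤ) = (m:ℤ) + 1 := by push_cast; ring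
    rw [hmcast]
    rcases eq_or_lt_of_le hr0 with hr1 | hr1
    · -- r = 0 : m = n*(k'-1) + (n-1), so m/n = k' - 1
      have hk : (m:ℤ)/n = k' - 1 := by
        have : ((m:ℤ)/n = k' - 1 ∧ (m:ℤ) % n = n - 1) ↔ _ := Int.ediv_emod_unique (by omega : (0:ℤ) < n)
        refine (this.mpr ⟨?_, by omega, by omega⟩).1
        nlinarith [hme]
      rw [hk]
      have hm1 : (m:ℤ) + 1 = n * k' := by omega
      linear_combination (-2 : ℤ) * hm1
    · -- r ≥ 1 : m/n = k'
      have hk : (m:ℤ)/n = k' := by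
        have : ((m:ℤ)/n = k' ∧ (m:ℤ) % n = r - 1) ↔ _ := Int.ediv_emod_unique (by omega : (0:ℤ) < n)
        refine (this.mpr ⟨?_, by omega, by omega⟩).1
        nlinarith [hme]
      rw [hk]
      ring

lemma tau_formula (p q n p' q' g : ℤ) (hp : 2 ≤ p) (hq : 2 ≤ q) (hpq : IsCoprime p q)
    (hn : 1 ≤ n)
    (hp'0 : 0 < p') (hp'p : p' < p) (hq'0 : 0 < q') (hq'q : q' < q)
    (hp' : q * p' ≡ 1 [ZMOD p]) (hq' : p * q' ≡ 1 [ZMOD q])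
    (hsum : q * p' + p * q' = p * q + 1) (hg : 2 * g = (p - 1) * (q - 1))
    (m : ℕ) (hm : (m:ℤ) ≤ n * g - 1) :
    brieskornTau p q n p' q' (p * q * m + 1)
      = 1 + m * (1 - g) + ∑ x ∈ Finset.range m, ((x:ℤ)+1) / n := by
  have hg1 : 1 ≤ g := by nlinarith
  induction m with
  | zero =>
    unfold brieskornTau
    norm_num
    simpa using delta_zero p q n p' q'
  | succ m ih =>
    have hm' : (m:ℤ) ≤ n * g - 1 := by push_cast at hm ⊢; nlinarith
    have hpq0 : (0:ℤ) < p * q := by positivity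
    have hpqm : 0 ≤ p * q * (m:ℤ) := by positivity
    have hsplit : (p * q * ((m:ℕ)+1 : ℕ) + 1).toNat = (p * q * m + 1).toNat + (p*q).toNat := by
      have hexp : p * q * ((m:ℕ)+1 : ℕ) = p * q * m + p * q := by push_cast; ring
      omega
    unfold brieskornTau
    rw [hsplit, Finset.sum_range_add]
    have ihh := ih hm'
    unfold brieskornTau at ihh
    rw [ihh]
    have hreflect := Finset.sum_range_reflect
      (fun x => brieskornDelta p q n p' q' (((p * q * m + 1).toNat + x : ℕ) : ℤ)) (p*q).toNat
    rw [← hreflect]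
    have hterm : ∀ x ∈ Finset.range (p*q).toNat,
        brieskornDelta p q n p' q' (((p * q * m + 1).toNat + ((p*q).toNat - 1 - x) : ℕ) : ℤ)
          = chi p q p' (x:ℤ) - (if ((m:ℤ)+1) < (x:ℤ) * n then 1 else 0) := by
      intro x hx
      rw [Finset.mem_range] at hx
      have hcast : (((p * q * m + 1).toNat + ((p*q).toNat - 1 - x) : ℕ) : ℤ)
          = p * q * ((m:ℤ)+1) - x := by
        have h1 : ((p * q * (m:ℤ) + 1).toNat : ℤ) = p * q * m + 1 := Int.toNat_of_nonneg (by omega)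
        have h2 : p * q * ((m:ℤ)+1) = p * q * m + p * q := by ring
        omega
      rw [hcast]
      exact delta_eq p q n p' q' hp hq hpq hn hp'0 hp'p hq'0 hq'q hp' hq' hsum
        ((m:ℤ)+1) x (by omega) (by nlinarith) (by positivity) (by omega)
    rw [Finset.sum_congr rfl hterm, Finset.sum_sub_distrib,
      sum_chi_pq p q p' g hp hq hp' hg,
      sum_w n ((m:ℤ)+1) hn (by positivity) (p*q).toNat (by
        have hb : ((m:ℤ)+1)/n < g := by
          rw [Int.ediv_lt_iff_lt_mul (by omega : (0:ℤ) < n)]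
          push_cast at hm
          nlinarith
        have h2 : (((p*q).toNat : ℤ)) = p * q := Int.toNat_of_nonneg (by positivity)
        nlinarith),
      Finset.sum_range_succ]
    have hPQ : (((p*q).toNat : ℕ) : ℤ) = p * q := Int.toNat_of_nonneg (le_of_lt hpq0)
    rw [hPQ]
    push_cast
    ring

/-- The 'bunch' of `n` leaves at the bottom level of the graded root of `Σ(p,q,pqn-1)`
(coprime `p,q ≥ 2`, `n ≥ 1`), with `g = (p-1)(q-1)/2`, `M_i = pqi + 1`,
`m_i = pqi - ⌊i/n⌋` and `α_i = #{s ∉ S_{p,q} : s > i}`: for `n(g-1) ≤ i ≤ ng - 2`,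
`τ(M_i) - τ(m_i) = α_{g-1}` and `2τ(m_i) = -2α_{g-1} + g(n - ng + 2)`. -/
theorem brieskornTau_bottom_bunch (p q n p' q' : ℤ) (hp : 2 ≤ p) (hq : 2 ≤ q)
    (hpq : IsCoprime p q) (hn : 1 ≤ n)
    (hp'0 : 0 < p') (hp'p : p' < p) (hq'0 : 0 < q') (hq'q : q' < q)
    (hp' : q * p' ≡ 1 [ZMOD p]) (hq' : p * q' ≡ 1 [ZMOD q])
    (g : ℤ) (hg : 2 * g = (p - 1) * (q - 1))
    (i : ℤ) (hi1 : n * (g - 1) ≤ i) (hi2 : i ≤ n * g - 2) :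
    brieskornTau p q n p' q' (p * q * i + 1)
        - brieskornTau p q n p' q' (p * q * i - i / n)
      = (gapAlpha p q (g - 1) : ℤ) ∧
    2 * brieskornTau p q n p' q' (p * q * i - i / n)
      = -2 * (gapAlpha p q (g - 1) : ℤ) + g * (n - n * g + 2) := by
  have hp0 : (0:ℤ) < p := by omega
  have hq0 : (0:ℤ) < q := by omega
  have hsum : q * p' + p * q' = p * q + 1 :=
    inv_sum p q p' q' hp hq hpq hp'0 hp'p hq'0 hq'q hp' hq'
  have hg1 : 1 ≤ g := by nlinarith
  have hgpq : g < p * q := by nlinarith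
  have hi0 : 0 ≤ i := by nlinarith
  have hexp : n * (g - 1) = n * g - n := by ring
  have hdiv : i / n = g - 1 := by
    have h := (Int.ediv_emod_unique (by omega : (0:ℤ) < n)).mpr
      (⟨by ring, by omega, by omega⟩ :
        (i - n * (g-1)) + n * (g - 1) = i ∧ 0 ≤ i - n * (g-1) ∧ i - n * (g-1) < n)
    exact h.1
  rw [hdiv]
  have hgi : g - 1 ≤ i := by nlinarith
  have hipqi : i ≤ p * q * i := by nlinarith
  have hm0 : 0 ≤ p * q * i - (g - 1) := by omega
  have hsplitN : (p * q * i + 1).toNat = (p * q * i - (g - 1)).toNat + g.toNat := by omega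
  have hacast : (((p * q * i - (g - 1)).toNat : ℕ) : ℤ) = p * q * i - (g - 1) :=
    Int.toNat_of_nonneg hm0
  have hGcast : ((g.toNat : ℕ) : ℤ) = g := Int.toNat_of_nonneg (by omega)
  -- the difference of taus as a sum of chi values
  have hdiff : brieskornTau p q n p' q' (p * q * i + 1)
      - brieskornTau p q n p' q' (p * q * i - (g - 1))
      = ∑ x ∈ Finset.range g.toNat, chi p q p' (x : ℤ) := by
    unfold brieskornTau
    rw [hsplitN, Finset.sum_range_add, add_sub_cancel_left]
    rw [← Finset.sum_range_reflect
      (fun x => brieskornDelta p q n p' q' (((p * q * i - (g - 1)).toNat + x : ℕ) : ℤ)) g.toNat]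
    apply Finset.sum_congr rfl
    intro x hx
    rw [Finset.mem_range] at hx
    have hxg : (x : ℤ) < g := by omega
    have hcast : (((p * q * i - (g - 1)).toNat + (g.toNat - 1 - x) : ℕ) : ℤ)
        = p * q * i - (x : ℤ) := by omega
    simp only [hcast]
    by_cases hi1' : 1 ≤ i
    · have hw : ¬ (i < (x:ℤ) * n) := by
        push_neg
        have h1 : (x:ℤ) * n ≤ (g - 1) * n := mul_le_mul_of_nonneg_right (by omega) (by omega)
        have h2 : (g - 1) * n = n * (g - 1) := by ring
        omega
      rw [delta_eq p q n p' q' hp hq hpq hn hp'0 hp'p hq'0 hq'q hp' hq' hsum i (x:ℤ)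
        hi1' (by nlinarith) (by positivity) (by omega), if_neg hw, sub_zero]
    · have hieq : i = 0 := by omega
      have hgle : g - 1 ≤ 0 := by nlinarith
      have hgeq : g = 1 := by omega
      have hx0 : x = 0 := by omega
      have harg : p * q * i - (x : ℤ) = 0 := by
        rw [hieq, hx0]; ring
      rw [harg, delta_zero, hx0]
      show (1:ℤ) = chi p q p' ((0:ℕ):ℤ)
      unfold chi
      norm_num
  have hchig := sum_chi_g p q p' g hp hq hpq hp' hg
  constructor
  · rw [hdiff, hchig]
  · -- second identity
    have hiN : i = ((i.toNat : ℕ) : ℤ) := (Int.toNat_of_nonneg hi0).symm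
    have htau : brieskornTau p q n p' q' (p * q * i + 1)
        = 1 + i * (1 - g) + ∑ x ∈ Finset.range i.toNat, ((x:ℤ)+1) / n := by
      have := tau_formula p q n p' q' g hp hq hpq hn hp'0 hp'p hq'0 hq'q hp' hq' hsum hg
        i.toNat (by rw [← hiN]; omega)
      rw [← hiN] at this
      exact this
    have hfl := sum_floor n hn i.toNat
    rw [← hiN, hdiv] at hfl
    have hτm : brieskornTau p q n p' q' (p * q * i - (g - 1))
        = brieskornTau p q n p' q' (p * q * i + 1) - (gapAlpha p q (g - 1) : ℤ) := by
      rw [← hchig, ← hdiff]; ring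
    rw [hτm, htau]
    linear_combination hfl
end

section
/- Fix an integer n ≥ 1 and let τ be the tau function of Σ(2,5,10n+3). Define M_i := 10i+1 for 0 ≤ i ≤ 2n-1 and M_i := 10i+7 for 2n ≤ i ≤ 3n-1, and m_i := 10i for 0 ≤ i ≤ 3n. Then: (a) τ(j+1) ≥ τ(j) whenever m_i ≤ j < M_i with 0 ≤ i ≤ 3n-1, τ(j+1) ≤ τ(j) whenever M_i ≤ j < m_{i+1} with 0 ≤ i ≤ 3n-1, and τ(j+1) ≥ τ(j) for all j ≥ m_{3n}; (b) τ(M_i) = 1-i for 0 ≤ i ≤ n-1, τ(M_i) = 1-n for n ≤ i ≤ 2n-1, and τ(M_i) = 2-3n+i for 2n ≤ i ≤ 3n-1; (c) τ(m_i) = -i for 0 ≤ i ≤ n-1, τ(m_i) = -n for n ≤ i ≤ 2n, and τ(m_i) = -3n+i for 2n+1 ≤ i ≤ 3n. -/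
/-!
Write `j = 10q + r` with `0 ≤ r < 10`. Since `10q(7n+2) = 7q(10n+3) - q`,
`Δ_{10q+r} = 1 + r - ⌈r/2⌉ - ⌈4r/5⌉ + ⌊(q + r(3n+1))/(10n+3)⌋`, and for `a n ≤ q < (a+1) n` this
floor is `⌊(3r + a)/10⌋`. So in each regime `a = 0, 1, 2` the blocks of ten values of `Δ` repeat
one profile, which sums to `a - 1`, and for `q ≥ 3n` they dominate the nonnegative profile of
`a = 3`. Summing profiles gives `τ` at `m_i` and `M_i`; the signs of their entries give the
monotonicity.
-/

/-- `Δ_j = 1 + 2j - ⌈j/2⌉ - ⌈4j/5⌉ - ⌈j(7n+2)/(10n+3)⌉` for the Seifert data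
`(-2, (2,1), (5,4), (10n+3, 7n+2))` of `Σ(2,5,10n+3)`. -/
noncomputable def delta25p (n j : ℤ) : ℤ :=
  1 + 2 * j - ⌈(j : ℚ) / 2⌉ - ⌈(4 * j : ℚ) / 5⌉ - ⌈(j * (7 * n + 2) : ℚ) / (10 * n + 3 : ℚ)⌉

/-- The tau function `τ(k) = Σ_{j=0}^{k-1} Δ_j` of `Σ(2,5,10n+3)`. -/
noncomputable def tau25p (n k : ℤ) : ℤ := ∑ j ∈ Finset.range k.toNat, delta25p n (j : ℤ)

/-- `M_i = 10i + 1` for `i ≤ 2n-1` and `M_i = 10i + 7` for `2n ≤ i`. -/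
def M25p (n i : ℤ) : ℤ := if i ≤ 2 * n - 1 then 10 * i + 1 else 10 * i + 7

/-- `m_i = 10i`. -/
def m25p (i : ℤ) : ℤ := 10 * i

open Finset

/-- `Δ_{10q+r}` for `a * n ≤ q < (a + 1) * n`; here `(-x) / k = -⌈x / k⌉`. -/
def deltaBlock (a r : ℤ) : ℤ := 1 + r + (-r) / 2 + (-(4 * r)) / 5 + (3 * r + a) / 10

lemma Int.ceil_intCast_div_eq_neg_ediv (a b : ℤ) (hb : 0 < b) :
    ⌈(a : ℚ) / (b : ℚ)⌉ = -((-a) / b) := by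
  lift b to ℕ using hb.le
  exact_mod_cast Rat.ceil_intCast_div_natCast a b

lemma delta25p_eq_ediv (n j : ℤ) (hn : 0 ≤ n) :
    delta25p n j = 1 + 2 * j + (-j) / 2 + (-(4 * j)) / 5 + (-(j * (7 * n + 2))) / (10 * n + 3) := by
  have h2 := Int.ceil_intCast_div_eq_neg_ediv j 2 two_pos
  have h5 := Int.ceil_intCast_div_eq_neg_ediv (4 * j) 5 (by norm_num)
  have h10 := Int.ceil_intCast_div_eq_neg_ediv (j * (7 * n + 2)) (10 * n + 3) (by omega)
  push_cast at h2 h5 h10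
  rw [delta25p, h2, h5, h10]
  ring

lemma delta25p_ten_mul_add (n q r : ℤ) (hn : 0 ≤ n) :
    delta25p n (10 * q + r) =
      1 + r + (-r) / 2 + (-(4 * r)) / 5 + (q + r * (3 * n + 1)) / (10 * n + 3) := by
  rw [delta25p_eq_ediv n _ hn,
    show -((10 * q + r) * (7 * n + 2)) = q + r * (3 * n + 1) + (10 * n + 3) * (-(7 * q) - r) by
      ring,
    Int.add_mul_ediv_left _ _ (by omega)]
  have h2 : (-(10 * q + r)) / 2 = (-r) / 2 - 5 * q := by omega
  have h5 : (-(4 * (10 * q + r))) / 5 = (-(4 * r)) / 5 - 8 * q := by omega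
  rw [h2, h5]
  ring

lemma ediv_ten_mul_add_three_eq (n q r : ℤ) (hn : 0 < n) (hq : 0 ≤ q) (hq' : q < 4 * n)
    (hr : 0 ≤ r) (hr' : r ≤ 9) :
    (q + r * (3 * n + 1)) / (10 * n + 3) = (3 * r + q / n) / 10 := by
  have hlo := Int.ediv_mul_le q hn.ne'
  have hhi := Int.lt_ediv_add_one_mul_self q hn
  have ha : 0 ≤ q / n := Int.ediv_nonneg hq hn.le
  have ha' : q / n < 4 := (Int.ediv_lt_iff_lt_mul hn).2 hq'
  rw [Int.ediv_eq_iff_of_pos (by omega)]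
  generalize q / n = a at *
  interval_cases a <;> interval_cases r <;> omega

lemma delta25p_ten_mul_add_eq_deltaBlock (n q r : ℤ) (hn : 0 < n) (hq : 0 ≤ q) (hq' : q < 4 * n)
    (hr : 0 ≤ r) (hr' : r ≤ 9) :
    delta25p n (10 * q + r) = deltaBlock (q / n) r := by
  rw [delta25p_ten_mul_add n q r hn.le, ediv_ten_mul_add_three_eq n q r hn hq hq' hr hr',
    deltaBlock]

lemma deltaBlock_three_le_delta25p (n q r : ℤ) (hn : 0 < n) (hq : 3 * n ≤ q)
    (hr : 0 ≤ r) (hr' : r ≤ 9) :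
    deltaBlock 3 r ≤ delta25p n (10 * q + r) := by
  have h := delta25p_ten_mul_add_eq_deltaBlock n (3 * n) r hn (by omega) (by omega) hr hr'
  rw [Int.mul_ediv_cancel _ hn.ne', delta25p_ten_mul_add n _ r hn.le] at h
  have hmono : (3 * n + r * (3 * n + 1)) / (10 * n + 3) ≤ (q + r * (3 * n + 1)) / (10 * n + 3) :=
    Int.ediv_le_ediv (by omega) (by omega)
  rw [← h, delta25p_ten_mul_add n q r hn.le]
  omega

lemma tau25p_add (n j : ℤ) (hj : 0 ≤ j) (k : ℕ) :
    tau25p n (j + k) = tau25p n j + ∑ r ∈ range k, delta25p n (j + r) := by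
  lift j to ℕ using hj
  rw [tau25p, tau25p, ← Nat.cast_add, Int.toNat_natCast, Int.toNat_natCast, sum_range_add]
  push_cast
  rfl

lemma tau25p_succ (n j : ℤ) (hj : 0 ≤ j) :
    tau25p n (j + 1) = tau25p n j + delta25p n j := by
  simpa using tau25p_add n j hj 1

lemma tau25p_ten_mul_add (n q : ℤ) (hn : 0 < n) (hq : 0 ≤ q) (hq' : q < 4 * n) (k : ℕ)
    (hk : k ≤ 10) :
    tau25p n (10 * q + k) = tau25p n (10 * q) + ∑ r ∈ range k, deltaBlock (q / n) r := by
  rw [tau25p_add n _ (by omega)]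
  congr 1
  refine sum_congr rfl fun r hr => ?_
  rw [mem_range] at hr
  exact delta25p_ten_mul_add_eq_deltaBlock n q r hn hq hq' (by omega) (by omega)

lemma sum_range_ten_deltaBlock (a : ℤ) (ha : 0 ≤ a) (ha' : a ≤ 3) :
    ∑ r ∈ range 10, deltaBlock a r = a - 1 := by
  simp only [sum_range_succ, sum_range_zero, deltaBlock]
  interval_cases a <;> norm_num

lemma ediv_regime (n i : ℤ) (hn : 0 < n) (hi : 0 ≤ i) (hi' : i < 3 * n) :
    0 ≤ i / n ∧ i / n < 3 ∧ (i / n < 1 ↔ i < n) ∧ (i / n < 2 ↔ i < 2 * n) := by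
  rw [Int.ediv_lt_iff_lt_mul hn, Int.ediv_lt_iff_lt_mul hn, Int.ediv_lt_iff_lt_mul hn, one_mul]
  exact ⟨Int.ediv_nonneg hi hn.le, hi', Iff.rfl, Iff.rfl⟩

lemma tau25p_m25p (n i : ℤ) (hn : 0 < n) (hi : 0 ≤ i) (hi' : i ≤ 3 * n) :
    tau25p n (m25p i) = -min i n + max (i - 2 * n) 0 := by
  induction i, hi using Int.leInduction with
  | base =>
    simp only [m25p, mul_zero, tau25p, Int.toNat_zero, range_zero, sum_empty]
    omega
  | succ i hi ih =>
    obtain ⟨h0, h3, h1, h2⟩ := ediv_regime n i hn hi (by omega)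
    have hstep := tau25p_ten_mul_add n i hn hi (by omega) 10 le_rfl
    rw [sum_range_ten_deltaBlock _ h0 (by omega)] at hstep
    rw [m25p] at ih ⊢
    push_cast at hstep
    rw [show 10 * (i + 1) = 10 * i + 10 by ring, hstep, ih (by omega)]
    omega

lemma tau25p_M25p (n i : ℤ) (hn : 0 < n) (hi : 0 ≤ i) (hi' : i ≤ 3 * n - 1) :
    tau25p n (M25p n i) = tau25p n (m25p i) + if i ≤ 2 * n - 1 then 1 else 2 := by
  obtain ⟨h0, h3, -, h2⟩ := ediv_regime n i hn hi (by omega)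
  rw [M25p, m25p]
  split_ifs
  · have h := tau25p_ten_mul_add n i hn hi (by omega) 1 (by norm_num)
    simp only [sum_range_one, deltaBlock] at h
    push_cast at h
    omega
  · have h := tau25p_ten_mul_add n i hn hi (by omega) 7 (by norm_num)
    simp only [sum_range_succ, sum_range_zero, deltaBlock] at h
    push_cast at h
    omega

lemma delta25p_nonneg_of_rise (n i j : ℤ) (hn : 0 < n) (hi : 0 ≤ i) (hi' : i ≤ 3 * n - 1)
    (hj : m25p i ≤ j) (hj' : j < M25p n i) : 0 ≤ delta25p n j := by
  obtain ⟨h0, h3, -, h2⟩ := ediv_regime n i hn hi (by omega)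
  rw [m25p] at hj
  rw [M25p] at hj'
  obtain ⟨r, rfl⟩ : ∃ r, j = 10 * i + r := ⟨j - 10 * i, by ring⟩
  have hr' : r ≤ 9 := by split_ifs at hj' <;> omega
  rw [delta25p_ten_mul_add_eq_deltaBlock n i r hn hi (by omega) (by omega) hr', deltaBlock]
  have hr : 0 ≤ r := by omega
  generalize i / n = a at *
  split_ifs at hj' <;> interval_cases a <;> interval_cases r <;> omega

lemma delta25p_nonpos_of_fall (n i j : ℤ) (hn : 0 < n) (hi : 0 ≤ i) (hi' : i ≤ 3 * n - 1)
    (hj : M25p n i ≤ j) (hj' : j < m25p (i + 1)) : delta25p n j ≤ 0 := by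
  obtain ⟨h0, h3, -, h2⟩ := ediv_regime n i hn hi (by omega)
  rw [m25p] at hj'
  rw [M25p] at hj
  obtain ⟨r, rfl⟩ : ∃ r, j = 10 * i + r := ⟨j - 10 * i, by ring⟩
  have hr : 0 ≤ r := by split_ifs at hj <;> omega
  rw [delta25p_ten_mul_add_eq_deltaBlock n i r hn hi (by omega) hr (by omega), deltaBlock]
  have hr' : r ≤ 9 := by omega
  generalize i / n = a at *
  split_ifs at hj <;> interval_cases a <;> interval_cases r <;> omega

lemma delta25p_nonneg_of_le (n j : ℤ) (hn : 0 < n) (hj : m25p (3 * n) ≤ j) :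
    0 ≤ delta25p n j := by
  rw [m25p] at hj
  have hblock := deltaBlock_three_le_delta25p n (j / 10) (j % 10) hn (by omega) (by omega)
    (by omega)
  rw [show 10 * (j / 10) + j % 10 = j by omega] at hblock
  have hr : 0 ≤ j % 10 := by omega
  have hr' : j % 10 < 10 := by omega
  generalize j % 10 = r at *
  interval_cases r <;> simp only [deltaBlock] at hblock <;> omega

/-- Structure of the tau function of `Σ(2,5,10n+3)` (`n ≥ 1`): monotonicity between the
local extrema `M_i`, `m_i`, and the values of `τ` at those extrema. -/
theorem tau_structure_25p (n : ℤ) (hn : 1 ≤ n) :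
    (∀ i : ℤ, 0 ≤ i → i ≤ 3 * n - 1 → ∀ j : ℤ, m25p i ≤ j → j < M25p n i →
      tau25p n j ≤ tau25p n (j + 1)) ∧
    (∀ i : ℤ, 0 ≤ i → i ≤ 3 * n - 1 → ∀ j : ℤ, M25p n i ≤ j → j < m25p (i + 1) →
      tau25p n (j + 1) ≤ tau25p n j) ∧
    (∀ j : ℤ, m25p (3 * n) ≤ j → tau25p n j ≤ tau25p n (j + 1)) ∧
    (∀ i : ℤ, 0 ≤ i → i ≤ n - 1 → tau25p n (M25p n i) = 1 - i) ∧
    (∀ i : ℤ, n ≤ i → i ≤ 2 * n - 1 → tau25p n (M25p n i) = 1 - n) ∧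
    (∀ i : ℤ, 2 * n ≤ i → i ≤ 3 * n - 1 → tau25p n (M25p n i) = 2 - 3 * n + i) ∧
    (∀ i : ℤ, 0 ≤ i → i ≤ n - 1 → tau25p n (m25p i) = -i) ∧
    (∀ i : ℤ, n ≤ i → i ≤ 2 * n → tau25p n (m25p i) = -n) ∧
    (∀ i : ℤ, 2 * n + 1 ≤ i → i ≤ 3 * n → tau25p n (m25p i) = -3 * n + i) := by
  have hpos : 0 < n := by omega
  have hm (i : ℤ) (hi : 0 ≤ i) (hi' : i ≤ 3 * n) := tau25p_m25p n i hpos hi hi'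
  have hM (i : ℤ) (hi : 0 ≤ i) (hi' : i ≤ 3 * n - 1) := tau25p_M25p n i hpos hi hi'
  refine ⟨fun i hi hi' j hj hj' => ?_, fun i hi hi' j hj hj' => ?_, fun j hj => ?_,
    fun i hi hi' => ?_, fun i hi hi' => ?_, fun i hi hi' => ?_,
    fun i hi hi' => ?_, fun i hi hi' => ?_, fun i hi hi' => ?_⟩
  · rw [tau25p_succ n j (by rw [m25p] at hj; omega)]
    linarith [delta25p_nonneg_of_rise n i j hpos hi hi' hj hj']
  · rw [tau25p_succ n j (by rw [M25p] at hj; split_ifs at hj <;> omega)]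
    linarith [delta25p_nonpos_of_fall n i j hpos hi hi' hj hj']
  · rw [tau25p_succ n j (by rw [m25p] at hj; omega)]
    linarith [delta25p_nonneg_of_le n j hpos hj]
  · rw [hM i hi (by omega), hm i hi (by omega), if_pos (by omega)]; omega
  · rw [hM i (by omega) (by omega), hm i (by omega) (by omega), if_pos (by omega)]; omega
  · rw [hM i (by omega) (by omega), hm i (by omega) (by omega), if_neg (by omega)]; omega
  · rw [hm i hi (by omega)]; omega
  · rw [hm i (by omega) (by omega)]; omega
  · rw [hm i (by omega) (by omega)]; omega
end
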